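/- Define a_ℓ = √(ℓ(ℓ-1)) for ℓ > 0 and a_ℓ = 0 otherwise. For ρ ∈ ℤ and s ∈ ℕ let N_{ρ,s}(n) be defined recursively by N_{ρ,0}(n) = a_{n+2ρ} and N_{ρ,s}(n) = N_{ρ,s-1}(n) - N_{ρ-1,s-1}(n). Then for all ρ ∈ ℤ, s ∈ ℕ there is a constant C_{ρ,s} such that |N_{ρ,s}(n)| ≤ C_{ρ,s} (2|n|+1)^{1-s} for all n ∈ ℤ. -/

import Mathlib

/-!
`N ρ s n` is the `s`-th forward difference with step `2` of `a`, taken at `n + 2ρ - 2s`.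
On `ℓ ≥ 1` the sequence `a` samples `x ↦ √(x² - x)`, whose `s`-th derivative is
`P_s(x) (x² - x)^(1/2 - s)` with `deg P_s ≤ s`, hence `O(x^(1-s))`. The mean value theorem,
iterated, turns the `s`-th difference at `m` into `2^s` times the `s`-th derivative at a point of
`[m, m + 2s]`, which gives the bound as `n → +∞`; as `n → -∞` the differences only see the zero
part of `a`, and finitely many `n` are absorbed into the constant.
-/

open Polynomial Asymptotics Filter fwdDiff

theorem fwdDiff_iter_congr {M G : Type*} [AddCommMonoid M] [AddCommGroup G] {h : M}
    {f g : M → G} {n : ℕ} {y : M} (hfg : ∀ k ≤ n, f (y + k • h) = g (y + k • h)) :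
    Δ_[h] ^[n] f y = Δ_[h] ^[n] g y := by
  simp only [fwdDiff_iter_eq_sum_shift]
  exact Finset.sum_congr rfl fun k hk ↦ by rw [hfg k (Finset.mem_range_succ_iff.1 hk)]

theorem fwdDiff_iter_comp_addMonoidHom {M M' G : Type*} [AddCommMonoid M] [AddCommMonoid M']
    [AddCommGroup G] (h : M) (φ : M →+ M') (g : M' → G) (n : ℕ) (y : M) :
    Δ_[h] ^[n] (g ∘ φ) y = Δ_[φ h] ^[n] g (φ y) := by
  simp [fwdDiff_iter_eq_sum_shift]

theorem hasDerivAt_fwdDiff_iter {f f' : ℝ → ℝ} {L h : ℝ} (hh : 0 ≤ h)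
    (hf : ∀ x, L < x → HasDerivAt f (f' x) x) (n : ℕ) {x : ℝ} (hx : L < x) :
    HasDerivAt (Δ_[h] ^[n] f) (Δ_[h] ^[n] f' x) x := by
  induction n generalizing x with
  | zero => exact hf x hx
  | succ n ih =>
    rw [Function.iterate_succ', Function.comp_apply]
    exact ((ih (by linarith : L < x + h)).comp_add_const x h).sub (ih hx)

theorem exists_fwdDiff_iter_eq_pow_mul {F : ℕ → ℝ → ℝ} {L h : ℝ} (hh : 0 < h)
    (hF : ∀ j x, L < x → HasDerivAt (F j) (F (j + 1) x) x) (n j : ℕ) {x : ℝ} (hx : L < x) :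
    ∃ ξ ∈ Set.Icc x (x + n * h), Δ_[h] ^[n] (F j) x = h ^ n * F (j + n) ξ := by
  induction n generalizing j x with
  | zero => exact ⟨x, by simp, by simp⟩
  | succ n ih =>
    have hderiv : ∀ y, L < y → HasDerivAt (Δ_[h] ^[n] (F j)) (Δ_[h] ^[n] (F (j + 1)) y) y :=
      fun y hy ↦ hasDerivAt_fwdDiff_iter hh.le (hF j) n hy
    obtain ⟨c, ⟨hxc, hch⟩, hc⟩ := exists_hasDerivAt_eq_slope _ _ (lt_add_of_pos_right x hh)
      (fun y hy ↦ (hderiv y (by linarith [hy.1])).continuousAt.continuousWithinAt)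
      (fun y hy ↦ hderiv y (by linarith [hy.1]))
    obtain ⟨ξ, ⟨hcξ, hξ⟩, hξc⟩ := ih (j + 1) (by linarith : L < c)
    refine ⟨ξ, ⟨by linarith, by push_cast; linarith⟩, ?_⟩
    rw [add_sub_cancel_left, hξc, eq_div_iff hh.ne'] at hc
    rw [Function.iterate_succ_apply', fwdDiff, ← hc, show j + (n + 1) = j + 1 + n by omega]
    ring

theorem eq_fwdDiff_iter_of_recursion {G : Type*} [AddCommGroup G] {a : ℤ → G}
    {N : ℤ → ℕ → ℤ → G} (hN0 : ∀ ρ n : ℤ, N ρ 0 n = a (n + 2 * ρ))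
    (hNs : ∀ (ρ : ℤ) (s : ℕ) (n : ℤ), N ρ (s + 1) n = N ρ s n - N (ρ - 1) s n)
    (ρ : ℤ) (s : ℕ) (n : ℤ) : N ρ s n = Δ_[2] ^[s] a (n + (2 * ρ - 2 * s)) := by
  induction s generalizing ρ with
  | zero => simp [hN0]
  | succ s ih =>
    have hshift : n + (2 * ρ - 2 * (s + 1 : ℕ)) = n + (2 * (ρ - 1) - 2 * s) := by push_cast; ring
    have hstep : n + (2 * (ρ - 1) - 2 * s) + 2 = n + (2 * ρ - 2 * s) := by ring
    rw [hNs, ih, ih, Function.iterate_succ_apply', fwdDiff, hshift, hstep]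

theorem zpow_le_pow_natAbs_mul_zpow {x y c : ℝ} (hx : 0 < x) (hy : 0 < y)
    (hxy : x ≤ c * y) (hyx : y ≤ c * x) (k : ℤ) : x ^ k ≤ c ^ k.natAbs * y ^ k := by
  obtain ⟨j, rfl | rfl⟩ := Int.eq_nat_or_neg k
  · simpa [mul_pow] using pow_le_pow_left₀ hx.le hxy j
  · simp only [zpow_neg, zpow_natCast, Int.natAbs_neg, Int.natAbs_natCast, ← div_eq_mul_inv]
    rw [inv_le_iff_one_le_mul₀ (by positivity), div_mul_eq_mul_div, le_div_iff₀ (by positivity),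
      one_mul, ← mul_pow]
    exact pow_le_pow_left₀ hy.le hyx j

noncomputable def sqrtDerivPoly : ℕ → ℝ[X]
  | 0 => 1
  | s + 1 => derivative (sqrtDerivPoly s) * (X ^ 2 - X)
      + C (1 / 2 - s : ℝ) * (2 * X - 1) * sqrtDerivPoly s

noncomputable def sqrtDeriv (s : ℕ) (x : ℝ) : ℝ :=
  (sqrtDerivPoly s).eval x * (x ^ 2 - x) ^ ((1 / 2 : ℝ) - s)

theorem hasDerivAt_sqrtDeriv (s : ℕ) {x : ℝ} (hx : 1 < x) :
    HasDerivAt (sqrtDeriv s) (sqrtDeriv (s + 1) x) x := by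
  have hu : x ^ 2 - x ≠ 0 := by nlinarith
  have hpow : HasDerivAt (fun y : ℝ ↦ (y ^ 2 - y) ^ ((1 / 2 : ℝ) - s))
      ((2 * x - 1) * ((1 / 2 : ℝ) - s) * (x ^ 2 - x) ^ ((1 / 2 : ℝ) - s - 1)) x := by
    simpa using ((hasDerivAt_pow 2 x).fun_sub (hasDerivAt_id' x)).rpow_const (.inl hu)
  have hsplit : (x ^ 2 - x) ^ ((1 / 2 : ℝ) - s) =
      (x ^ 2 - x) ^ ((1 / 2 : ℝ) - s - 1) * (x ^ 2 - x) := by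
    rw [← Real.rpow_add_one hu, sub_add_cancel]
  refine (((sqrtDerivPoly s).hasDerivAt x).fun_mul hpow).congr_deriv ?_
  simp only [sqrtDeriv, sqrtDerivPoly, eval_add, eval_mul, eval_sub, eval_pow, eval_X, eval_C,
    eval_one, eval_ofNat, Nat.cast_succ, hsplit, sub_add_eq_sub_sub]
  ring

theorem natDegree_sqrtDerivPoly_le (s : ℕ) : (sqrtDerivPoly s).natDegree ≤ s := by
  induction s with
  | zero => simp [sqrtDerivPoly]
  | succ s ih =>
    rw [sqrtDerivPoly]
    refine natDegree_add_le_of_degree_le ?_ ?_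
    · rcases eq_or_ne (sqrtDerivPoly s).natDegree 0 with h0 | h0
      · simp [derivative_of_natDegree_zero h0]
      refine natDegree_mul_le.trans ?_
      have : (X ^ 2 - X : ℝ[X]).natDegree ≤ 2 := by compute_degree
      have := natDegree_derivative_le (sqrtDerivPoly s)
      omega
    · refine natDegree_mul_le.trans ?_
      have : (C (1 / 2 - s : ℝ) * (2 * X - 1)).natDegree ≤ 1 := by compute_degree
      omega

theorem isBigO_sqrtDeriv (s : ℕ) : sqrtDeriv s =O[atTop] fun x ↦ x ^ (1 - s : ℤ) := by
  have hpoly : (sqrtDerivPoly s).eval =O[atTop] fun x ↦ x ^ s := by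
    simpa using isBigO_atTop_of_degree_le (sqrtDerivPoly s) (X ^ s)
      ((degree_le_of_natDegree_le (natDegree_sqrtDerivPoly_le s)).trans_eq (degree_X_pow s).symm)
  have hequiv : (fun x : ℝ ↦ x ^ 2 - x) ~[atTop] fun x ↦ x ^ 2 := by
    have h1 : (X ^ 2 - X : ℝ[X]).natDegree = 2 := by compute_degree!
    have h2 : (X ^ 2 - X : ℝ[X]).leadingCoeff = 1 := by monicity!
    convert (X ^ 2 - X : ℝ[X]).isEquivalent_atTop_lead using 2 <;> simp [h1, h2]
  have hrpow := (hequiv.isTheta.rpow (r := (1 / 2 : ℝ) - s) ?_ ?_).isBigO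
  refine (hpoly.mul hrpow).congr' .rfl ?_
  · filter_upwards [eventually_gt_atTop 0] with x hx
    rw [← Real.rpow_natCast, ← Real.rpow_natCast, ← Real.rpow_mul hx.le, ← Real.rpow_add hx,
      ← Real.rpow_intCast]
    push_cast; ring_nf
  · filter_upwards [eventually_ge_atTop 1] with x hx
    simp only [Pi.zero_apply]; nlinarith
  · exact Eventually.of_forall fun x ↦ sq_nonneg x

noncomputable def sqrtSeq (ℓ : ℤ) : ℝ := if 0 < ℓ then √((ℓ : ℝ) * ((ℓ : ℝ) - 1)) else 0

theorem sqrtSeq_eq_sqrtDeriv_zero {ℓ : ℤ} (hℓ : 0 < ℓ) : sqrtSeq ℓ = sqrtDeriv 0 ℓ := by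
  rw [sqrtSeq, if_pos hℓ, sqrtDeriv, sqrtDerivPoly, Real.sqrt_eq_rpow]
  simp [sq, mul_sub]

theorem fwdDiff_iter_sqrtSeq_eq {m : ℤ} (hm : 0 < m) (s : ℕ) :
    Δ_[2] ^[s] sqrtSeq m = Δ_[(2 : ℝ)] ^[s] (sqrtDeriv 0) m := by
  rw [fwdDiff_iter_congr (g := sqrtDeriv 0 ∘ Int.castAddHom ℝ), fwdDiff_iter_comp_addMonoidHom]
  · simp
  · intro k _
    rw [sqrtSeq_eq_sqrtDeriv_zero (by positivity)]
    simp

theorem fwdDiff_iter_sqrtSeq_eq_zero {m : ℤ} {s : ℕ} (hm : m + 2 * s ≤ 0) :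
    Δ_[2] ^[s] sqrtSeq m = 0 := by
  rw [fwdDiff_iter_eq_sum_shift]
  refine Finset.sum_eq_zero fun k hk ↦ ?_
  have : ¬ 0 < m + k • 2 := by
    have := Finset.mem_range_succ_iff.1 hk
    simp only [nsmul_eq_mul]; omega
  rw [sqrtSeq, if_neg this, smul_zero]

theorem isBigO_atTop_fwdDiff_iter_sqrtSeq (s : ℕ) (c : ℤ) :
    (fun n : ℤ ↦ Δ_[2] ^[s] sqrtSeq (n + c)) =O[atTop]
      fun n ↦ (2 * |(n : ℝ)| + 1) ^ (1 - s : ℤ) := by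
  obtain ⟨B, hB, hBound⟩ := (isBigO_sqrtDeriv s).exists_pos
  obtain ⟨X, hX⟩ := eventually_atTop.1 hBound.bound
  refine .of_bound (2 ^ s * B * 5 ^ (1 - s : ℤ).natAbs) ?_
  filter_upwards [eventually_ge_atTop (2 - c), eventually_ge_atTop (⌈X⌉ - c),
    eventually_ge_atTop (2 * |c| + 2 * s + 1)] with n hn2 hnX hnc
  have hm : (1 : ℝ) < (n + c : ℤ) := by exact_mod_cast (by omega : 1 < n + c)
  obtain ⟨ξ, ⟨hmξ, hξm⟩, hξ⟩ := exists_fwdDiff_iter_eq_pow_mul two_pos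
    (fun j x hx ↦ hasDerivAt_sqrtDeriv j hx) s 0 hm
  rw [fwdDiff_iter_sqrtSeq_eq (by omega), hξ, zero_add]
  have hn : 2 * |(c : ℝ)| + 2 * s + 1 ≤ n := by exact_mod_cast hnc
  have hXm : X ≤ (n + c : ℤ) := Int.ceil_le.1 (by omega)
  push_cast at hm hmξ hξm hXm
  have hξpos : 0 < ξ := by linarith
  have hn0 : 0 ≤ (n : ℝ) := by linarith [abs_nonneg (c : ℝ)]
  -- `ξ ∈ [n + c, n + c + 2s]` and `2n + 1` are within a factor `5` of each other
  have hcompare := zpow_le_pow_natAbs_mul_zpow hξpos (by positivity : (0 : ℝ) < 2 * |(n : ℝ)| + 1)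
    (c := 5) (by rw [abs_of_nonneg hn0]; linarith [le_abs_self (c : ℝ)])
    (by rw [abs_of_nonneg hn0]; linarith [neg_abs_le (c : ℝ)]) (1 - s)
  have hξX : ‖sqrtDeriv s ξ‖ ≤ B * ‖ξ ^ (1 - s : ℤ)‖ := hX ξ (by linarith)
  rw [Real.norm_of_nonneg (zpow_pos hξpos _).le] at hξX
  rw [Real.norm_of_nonneg (zpow_pos (by positivity) _).le, norm_mul, norm_pow, Real.norm_two]
  calc 2 ^ s * ‖sqrtDeriv s ξ‖ ≤ 2 ^ s * (B * ξ ^ (1 - s : ℤ)) := by gcongr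
    _ ≤ 2 ^ s * (B * (5 ^ (1 - s : ℤ).natAbs * (2 * |(n : ℝ)| + 1) ^ (1 - s : ℤ))) := by gcongr
    _ = _ := by ring

theorem isBigO_cofinite_fwdDiff_iter_sqrtSeq (s : ℕ) (c : ℤ) :
    (fun n : ℤ ↦ Δ_[2] ^[s] sqrtSeq (n + c)) =O[cofinite]
      fun n ↦ (2 * |(n : ℝ)| + 1) ^ (1 - s : ℤ) := by
  rw [Int.cofinite_eq]
  refine IsBigO.sup ((isBigO_zero _ _).congr' ?_ .rfl) (isBigO_atTop_fwdDiff_iter_sqrtSeq s c)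
  filter_upwards [eventually_le_atBot (-c - 2 * s)] with n hn
  exact (fwdDiff_iter_sqrtSeq_eq_zero (by omega)).symm

theorem iterated_difference_coefficient_bound
    (a : ℤ → ℝ) (ha : ∀ ℓ : ℤ, a ℓ = if 0 < ℓ then Real.sqrt ((ℓ : ℝ) * ((ℓ : ℝ) - 1)) else 0)
    (N : ℤ → ℕ → ℤ → ℝ)
    (hN0 : ∀ ρ n : ℤ, N ρ 0 n = a (n + 2 * ρ))
    (hNs : ∀ (ρ : ℤ) (s : ℕ) (n : ℤ), N ρ (s + 1) n = N ρ s n - N (ρ - 1) s n) :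
    ∀ (ρ : ℤ) (s : ℕ), ∃ C : ℝ, ∀ n : ℤ,
      |N ρ s n| ≤ C * (2 * |(n : ℝ)| + 1) ^ (1 - (s : ℤ)) := by
  obtain rfl : a = sqrtSeq := funext ha
  intro ρ s
  have hpos (n : ℤ) : 0 < (2 * |(n : ℝ)| + 1) ^ (1 - (s : ℤ)) := zpow_pos (by positivity) _
  obtain ⟨C, hC⟩ := (isBigO_cofinite_iff fun n h ↦ absurd h (hpos n).ne').1
    (isBigO_cofinite_fwdDiff_iter_sqrtSeq s (2 * ρ - 2 * s))
  refine ⟨C, fun n ↦ ?_⟩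
  rw [eq_fwdDiff_iter_of_recursion hN0 hNs, ← Real.norm_eq_abs, ← Real.norm_of_nonneg (hpos n).le]
  exact hC n
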